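/- Let (M,g,J) be a pseudo-Hermitian manifold (J integrable). Then ∇Ω ∈ U₃,₋ pointwise: ∇Ω(x,y;z) = ∇Ω(x,Jy;Jz) for all vector fields x,y,z. -/

import Mathlib

open scoped Matrix
/-- The metric as a function of the point: `g_p(x,y) = xᵀ G(p) y`. -/
def gfun {m : ℕ} (G : (Fin m → ℝ) → Matrix (Fin m) (Fin m) ℝ)
    (p x y : Fin m → ℝ) : ℝ := x ⬝ᵥ (G p).mulVec y

/-- Lowered Christoffel term: `g(∇_z x, w)` for constant (coordinate) vector fields,
given by the Koszul formula `½(∂_z g(x,w) + ∂_x g(z,w) − ∂_w g(z,x))`. -/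
noncomputable def Klow {m : ℕ} (G : (Fin m → ℝ) → Matrix (Fin m) (Fin m) ℝ)
    (z x w p : Fin m → ℝ) : ℝ :=
  (1/2) * (fderiv ℝ (fun q => gfun G q x w) p z + fderiv ℝ (fun q => gfun G q z w) p x
    - fderiv ℝ (fun q => gfun G q z x) p w)

/-- `∇Ω(x,y;z)(p) = ∂_z g(x,Jy) − g(∇_z x, Jy) − g(x, J∇_z y)`, for constant vector
fields; here `g(x, J∇_z y) = −g(Jx, ∇_z y)` by Hermitian invariance. -/
noncomputable def nablaOmegaC {m : ℕ} (G : (Fin m → ℝ) → Matrix (Fin m) (Fin m) ℝ)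
    (J : Matrix (Fin m) (Fin m) ℝ) (x y z p : Fin m → ℝ) : ℝ :=
  fderiv ℝ (fun q => gfun G q x (J.mulVec y)) p z
    - Klow G z x (J.mulVec y) p + Klow G z y (J.mulVec x) p

/-!
With `J` constant, the Koszul formula reduces `∇Ω` to first derivatives of the metric
coefficients, and the `∂_z` terms cancel by the antisymmetry of `Ω`, leaving
`∇Ω(x,y;z) = ½(∂_{Jy} g(z,x) − ∂_{Jx} g(z,y) + ∂_y g(z,Jx) − ∂_x g(z,Jy))`.
Substituting `y ↦ Jy`, `z ↦ Jz` and using `J² = −1`, the `J`-invariance of `g` and the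
skew-adjointness of `J` returns the same four terms.
-/

section PseudoHermitian

variable {m : ℕ} {G : (Fin m → ℝ) → Matrix (Fin m) (Fin m) ℝ} {J : Matrix (Fin m) (Fin m) ℝ}

theorem mulVec_mulVec_eq_neg (hJ2 : J * J = -1) (v : Fin m → ℝ) : J *ᵥ (J *ᵥ v) = -v := by
  rw [Matrix.mulVec_mulVec, hJ2, Matrix.neg_mulVec, Matrix.one_mulVec]

theorem gfun_neg_left (p a b : Fin m → ℝ) : gfun G p (-a) b = -gfun G p a b := by
  simp only [gfun, neg_dotProduct]

theorem gfun_neg_right (p a b : Fin m → ℝ) : gfun G p a (-b) = -gfun G p a b := by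
  simp only [gfun, Matrix.mulVec_neg, dotProduct_neg]

theorem gfun_mulVec_left (hJ2 : J * J = -1)
    (hJG : ∀ p x y, gfun G p (J *ᵥ x) (J *ᵥ y) = gfun G p x y) (p a b : Fin m → ℝ) :
    gfun G p (J *ᵥ a) b = -gfun G p a (J *ᵥ b) := by
  rw [← hJG p (J *ᵥ a) b, mulVec_mulVec_eq_neg hJ2, gfun_neg_left]

theorem gfun_mulVec_right_swap (hGsymm : ∀ p x y, gfun G p x y = gfun G p y x)
    (hJ2 : J * J = -1) (hJG : ∀ p x y, gfun G p (J *ᵥ x) (J *ᵥ y) = gfun G p x y)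
    (p a b : Fin m → ℝ) : gfun G p a (J *ᵥ b) = -gfun G p b (J *ᵥ a) := by
  rw [hGsymm, gfun_mulVec_left hJ2 hJG]

theorem fderiv_gfun_neg_right (a b p : Fin m → ℝ) :
    fderiv ℝ (fun q => gfun G q a (-b)) p = -fderiv ℝ (fun q => gfun G q a b) p := by
  simp only [gfun_neg_right, fderiv_fun_neg]

theorem fderiv_gfun_mulVec_mulVec (hJG : ∀ p x y, gfun G p (J *ᵥ x) (J *ᵥ y) = gfun G p x y)
    (a b p : Fin m → ℝ) :
    fderiv ℝ (fun q => gfun G q (J *ᵥ a) (J *ᵥ b)) p = fderiv ℝ (fun q => gfun G q a b) p := by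
  simp only [hJG]

theorem fderiv_gfun_mulVec_left (hJ2 : J * J = -1)
    (hJG : ∀ p x y, gfun G p (J *ᵥ x) (J *ᵥ y) = gfun G p x y) (a b p : Fin m → ℝ) :
    fderiv ℝ (fun q => gfun G q (J *ᵥ a) b) p = -fderiv ℝ (fun q => gfun G q a (J *ᵥ b)) p := by
  simp only [gfun_mulVec_left hJ2 hJG, fderiv_fun_neg]

theorem fderiv_gfun_mulVec_right_swap (hGsymm : ∀ p x y, gfun G p x y = gfun G p y x)
    (hJ2 : J * J = -1) (hJG : ∀ p x y, gfun G p (J *ᵥ x) (J *ᵥ y) = gfun G p x y)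
    (a b p : Fin m → ℝ) :
    fderiv ℝ (fun q => gfun G q a (J *ᵥ b)) p = -fderiv ℝ (fun q => gfun G q b (J *ᵥ a)) p := by
  rw [← fderiv_fun_neg]
  exact congrArg (fderiv ℝ · p) (funext fun q => gfun_mulVec_right_swap hGsymm hJ2 hJG q a b)

theorem nablaOmegaC_eq (hGsymm : ∀ p x y, gfun G p x y = gfun G p y x)
    (hJ2 : J * J = -1) (hJG : ∀ p x y, gfun G p (J *ᵥ x) (J *ᵥ y) = gfun G p x y)
    (x y z p : Fin m → ℝ) :
    nablaOmegaC G J x y z p =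
      (1 / 2) * (fderiv ℝ (fun q => gfun G q z x) p (J *ᵥ y)
        - fderiv ℝ (fun q => gfun G q z y) p (J *ᵥ x)
        + fderiv ℝ (fun q => gfun G q z (J *ᵥ x)) p y
        - fderiv ℝ (fun q => gfun G q z (J *ᵥ y)) p x) := by
  rw [nablaOmegaC, Klow, Klow, fderiv_gfun_mulVec_right_swap hGsymm hJ2 hJG y x,
    neg_apply]
  ring

end PseudoHermitian

theorem stmt_18_general {m : ℕ} (G : (Fin m → ℝ) → Matrix (Fin m) (Fin m) ℝ)
    (J : Matrix (Fin m) (Fin m) ℝ)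
    (hGsymm : ∀ p x y, gfun G p x y = gfun G p y x)
    (hJ2 : J * J = -1)
    (hJG : ∀ p x y, gfun G p (J.mulVec x) (J.mulVec y) = gfun G p x y) :
    ∀ x y z p, nablaOmegaC G J x y z p = nablaOmegaC G J x (J.mulVec y) (J.mulVec z) p := by
  intro x y z p
  rw [nablaOmegaC_eq hGsymm hJ2 hJG, nablaOmegaC_eq hGsymm hJ2 hJG,
    mulVec_mulVec_eq_neg hJ2, fderiv_gfun_neg_right, fderiv_gfun_mulVec_mulVec hJG,
    fderiv_gfun_mulVec_mulVec hJG, fderiv_gfun_mulVec_left hJ2 hJG z x,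
    fderiv_gfun_mulVec_left hJ2 hJG z y]
  simp only [map_neg, neg_apply]
  ring

/-- On a pseudo-Hermitian manifold (in local coordinates in which the integrable
structure `J` is constant), `∇Ω ∈ U₃,₋` pointwise: `∇Ω(x,y;z) = ∇Ω(x,Jy;Jz)`. -/
theorem stmt_18 {m : ℕ} (G : (Fin m → ℝ) → Matrix (Fin m) (Fin m) ℝ)
    (J : Matrix (Fin m) (Fin m) ℝ)
    (hGdiff : ∀ x y, Differentiable ℝ (fun p => gfun G p x y))
    (hGsymm : ∀ p x y, gfun G p x y = gfun G p y x)
    (hGnd : ∀ p x, (∀ y, gfun G p x y = 0) → x = 0)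
    (hJ2 : J * J = -1)
    (hJG : ∀ p x y, gfun G p (J.mulVec x) (J.mulVec y) = gfun G p x y) :
    ∀ x y z p, nablaOmegaC G J x y z p = nablaOmegaC G J x (J.mulVec y) (J.mulVec z) p :=
  stmt_18_general G J hGsymm hJ2 hJG
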